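/- arXiv:2206.14600 — 2 statements merged into one kernel-verified Lean document; each statement's English description precedes it below -/
import Mathlib

section
/- The complex logarithm induces a topological group isomorphism log : ℂ^× → ℂ/(2πiℤ), whose inverse is the map induced by the exponential; moreover the pushforward under log of the Lebesgue measure on ℂ^× is the measure e^{2 Re(z')} dLeb_E(z') on E = ℂ/(2πiℤ), where Leb_E is the measure induced by Lebesgue measure on ℂ via the quotient. -/
open MeasureTheory Real

/-- The cylinder `E = ℂ/(2πiℤ)`. -/
noncomputable abbrev CylE : Type := ℂ ⧸ AddSubgroup.zmultiples (2 * Real.pi * Complex.I)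

/-- The Haar measure `Leb_E` on `E = ℂ/(2πiℤ)` induced by Lebesgue measure on `ℂ`
via the quotient (using the fundamental domain `{z : Im z ∈ [-π, π)}`). -/
noncomputable def LebE : Measure CylE :=
  Measure.map (QuotientAddGroup.mk : ℂ → CylE)
    (volume.restrict {z : ℂ | z.im ∈ Set.Ico (-Real.pi) Real.pi})

/-!
`exp : ℂ → ℂˣ` is a continuous, open, surjective homomorphism whose fibres are the cosets of
`2πiℤ`, so it descends to a homeomorphism `E ≃ ℂˣ`; its inverse is induced by `log`, and it is
additive because `exp (log u + log v) = u v`. For the measure, `exp` is injective on the strip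
`-π ≤ Im z < π` defining `Leb_E`, maps it onto `ℂˣ`, and has real Jacobian `|exp z|² = e^{2 Re z}`,
so the change of variables formula pushes `e^{2 Re z} dLeb` on the strip to Lebesgue measure
on `ℂˣ`.
-/

theorem Units.range_val₀ {G₀ : Type*} [GroupWithZero G₀] :
    Set.range (Units.val : G₀ˣ → G₀) = {0}ᶜ := by
  ext x
  exact ⟨fun ⟨u, hu⟩ => hu ▸ u.ne_zero, fun hx => ⟨Units.mk0 x hx, rfl⟩⟩

theorem Units.measurableEmbedding_val₀ {G₀ : Type*} [GroupWithZero G₀] [MeasurableSpace G₀]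
    [MeasurableSingletonClass G₀] : MeasurableEmbedding (Units.val : G₀ˣ → G₀) where
  injective := Units.val_injective
  measurable := comap_measurable _
  measurableSet_image' := by
    rintro _ ⟨t, ht, rfl⟩
    rw [Set.image_preimage_eq_inter_range, Units.range_val₀]
    exact ht.inter (measurableSet_singleton 0).compl

theorem MeasureTheory.Measure.map_withDensity_comp {α β : Type*} [MeasurableSpace α]
    [MeasurableSpace β] {f : α → β} (hf : Measurable f) (μ : Measure α) {g : β → ENNReal}
    (hg : Measurable g) : (μ.withDensity (g ∘ f)).map f = (μ.map f).withDensity g := by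
  ext t ht
  rw [map_apply hf ht, withDensity_apply _ (hf ht), withDensity_apply _ ht,
    setLIntegral_map ht hg hf]
  rfl

theorem ContinuousLinearMap.abs_det_restrictScalars_toSpanSingleton (c : ℂ) :
    |((ContinuousLinearMap.toSpanSingleton ℂ c).restrictScalars ℝ).det| = ‖c‖ ^ 2 := by
  rw [ContinuousLinearMap.det]
  simp [LinearMap.det_restrictScalars, Algebra.norm_complex_eq, Complex.normSq_eq_norm_sq]

namespace CylE

theorem mk_eq_mk_iff_exp_eq {a b : ℂ} : (a : CylE) = b ↔ Complex.exp a = Complex.exp b := by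
  rw [QuotientAddGroup.eq_iff_sub_mem, AddSubgroup.mem_zmultiples_iff,
    Complex.exp_eq_exp_iff_exists_int]
  exact exists_congr fun n => by rw [zsmul_eq_mul, eq_sub_iff_add_eq', eq_comm]

noncomputable def exp : CylE → ℂˣ :=
  Quotient.lift (fun z => Units.mk0 (Complex.exp z) (Complex.exp_ne_zero z))
    fun _ _ h => Units.ext (mk_eq_mk_iff_exp_eq.1 (Quotient.sound h))

noncomputable def log (u : ℂˣ) : CylE := Complex.log u

theorem exp_log (u : ℂˣ) : CylE.exp (log u) = u :=
  Units.ext (Complex.exp_log u.ne_zero)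

theorem log_exp (q : CylE) : log (CylE.exp q) = q := by
  induction q using QuotientAddGroup.induction_on with
  | H z => exact mk_eq_mk_iff_exp_eq.2 (Complex.exp_log (Complex.exp_ne_zero z))

theorem log_mul (u v : ℂˣ) : log (u * v) = log u + log v := by
  refine mk_eq_mk_iff_exp_eq.2 ?_
  rw [Complex.exp_add, Complex.exp_log (u * v).ne_zero, Complex.exp_log u.ne_zero,
    Complex.exp_log v.ne_zero, Units.val_mul]

theorem continuous_exp : Continuous CylE.exp := by
  rw [← QuotientAddGroup.isOpenQuotientMap_mk.continuous_comp_iff,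
    Units.isEmbedding_val₀.continuous_iff]
  exact Complex.continuous_exp

theorem isOpenMap_exp : IsOpenMap CylE.exp := by
  rw [QuotientAddGroup.isOpenQuotientMap_mk.isOpenMap_iff, Units.isOpenEmbedding_val.isOpenMap_iff]
  exact Complex.isOpenMap_exp

noncomputable def expHomeomorph : CylE ≃ₜ ℂˣ :=
  Equiv.toHomeomorphOfContinuousOpen ⟨CylE.exp, log, log_exp, exp_log⟩ continuous_exp isOpenMap_exp

theorem expHomeomorph_symm_apply (u : ℂˣ) : expHomeomorph.symm u = log u := rfl

noncomputable def re : CylE →+ ℝ :=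
  QuotientAddGroup.lift _ Complex.reAddGroupHom <| AddSubgroup.zmultiples_le.2 <| by simp

@[fun_prop]
theorem measurable_exp : Measurable CylE.exp :=
  QuotientAddGroup.measurable_from_quotient.2 <|
    Units.measurableEmbedding_val₀.measurable_comp_iff.1 Complex.measurable_exp

@[fun_prop]
theorem measurable_log : Measurable log :=
  QuotientAddGroup.measurable_coe.comp (Complex.measurable_log.comp (comap_measurable _))

@[fun_prop]
theorem measurable_re : Measurable re :=
  QuotientAddGroup.measurable_from_quotient.2 Complex.measurable_re

def strip : Set ℂ := {z : ℂ | z.im ∈ Set.Ico (-π) π}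

theorem measurableSet_strip : MeasurableSet strip :=
  Complex.measurable_im measurableSet_Ico

theorem exp_image_strip : Complex.exp '' strip = {0}ᶜ := by
  refine Set.Subset.antisymm (Set.image_subset_iff.2 fun z _ => Complex.exp_ne_zero z) ?_
  intro w hw
  -- `conj ∘ log ∘ conj` is the branch of the logarithm with imaginary part in `[-π, π)`.
  refine ⟨(starRingEnd ℂ) (Complex.log ((starRingEnd ℂ) w)), ?_, ?_⟩
  · have hπ := Complex.neg_pi_lt_arg ((starRingEnd ℂ) w)
    have hπ' := Complex.arg_le_pi ((starRingEnd ℂ) w)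
    simp only [strip, Set.mem_ofPred_eq, Complex.conj_im, Complex.log_im, Set.mem_Ico]
    constructor <;> linarith
  · rw [Complex.exp_conj, Complex.exp_log (by simpa using hw), Complex.conj_conj]

theorem injOn_exp_strip : Set.InjOn Complex.exp strip := by
  intro a ha b hb hab
  obtain ⟨n, rfl⟩ := Complex.exp_eq_exp_iff_exists_int.1 hab
  have him : (b + n * (2 * π * Complex.I)).im = b.im + n * (2 * π) := by simp
  obtain ⟨ha₁, ha₂⟩ : -π ≤ b.im + n * (2 * π) ∧ b.im + n * (2 * π) < π := him ▸ ha
  obtain ⟨hb₁, hb₂⟩ := hb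
  obtain rfl : n = 0 := by
    have h : |(n : ℝ)| < 1 := abs_lt.2 ⟨by nlinarith [pi_pos], by nlinarith [pi_pos]⟩
    exact Int.abs_lt_one_iff.1 (by exact_mod_cast h)
  simp

theorem map_exp_restrict_strip_withDensity :
    ((volume.restrict strip).withDensity fun z => ENNReal.ofReal (Real.exp (2 * z.re))).map
      Complex.exp = volume.restrict {0}ᶜ := by
  rw [← exp_image_strip, ← map_withDensity_abs_det_fderiv_eq_addHaar volume
    measurableSet_strip.nullMeasurableSet
    (fun z _ => ((Complex.hasDerivAt_exp z).hasFDerivAt.restrictScalars ℝ).hasFDerivWithinAt)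
    injOn_exp_strip]
  congr with z
  rw [ContinuousLinearMap.abs_det_restrictScalars_toSpanSingleton, Complex.norm_exp,
    ← Real.exp_nat_mul]
  norm_num

theorem map_exp_withDensity :
    (LebE.withDensity fun q => ENNReal.ofReal (Real.exp (2 * re q))).map CylE.exp =
      volume.comap Units.val := by
  apply Units.measurableEmbedding_val₀.map_injective
  rw [Units.measurableEmbedding_val₀.map_comap, Units.range_val₀,
    ← map_exp_restrict_strip_withDensity, LebE, ← strip,
    ← Measure.map_withDensity_comp QuotientAddGroup.measurable_coe _ (by fun_prop),
    Measure.map_map measurable_exp QuotientAddGroup.measurable_coe,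
    Measure.map_map (comap_measurable _) (measurable_exp.comp QuotientAddGroup.measurable_coe)]
  rfl

end CylE

/-- The complex logarithm induces a topological group isomorphism
`log : ℂ^× → ℂ/(2πiℤ)` inverse to the map induced by `exp`, and the pushforward of
the Lebesgue measure of `ℂ^×` under `log` is `e^{2 Re z'} dLeb_E(z')`. -/
theorem log_iso_and_pushforward :
    ∃ (e : ℂˣ ≃ₜ CylE) (ReE : CylE → ℝ),
      (∀ u v : ℂˣ, e (u * v) = e u + e v) ∧
      (∀ z : ℂ, e (Units.mk0 (Complex.exp z) (Complex.exp_ne_zero z))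
          = QuotientAddGroup.mk z) ∧
      (∀ z : ℂ, ReE (QuotientAddGroup.mk z) = z.re) ∧
      Measure.map (fun u : ℂˣ => e u)
          (Measure.comap (fun u : ℂˣ => (u : ℂ)) volume)
        = LebE.withDensity fun z' => ENNReal.ofReal (Real.exp (2 * ReE z')) := by
  refine ⟨CylE.expHomeomorph.symm, CylE.re, CylE.log_mul,
    fun z => CylE.expHomeomorph.symm_apply_apply z, fun _ => rfl, ?_⟩
  simp only [CylE.expHomeomorph_symm_apply]
  rw [← CylE.map_exp_withDensity, Measure.map_map CylE.measurable_log CylE.measurable_exp,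
    Function.LeftInverse.comp_eq_id CylE.log_exp, Measure.map_id]
end

section
/- Let p ∈ ℂ with |p| ≤ 2N. Then the area of the region C̃_{p,N} = {z ∈ ℂ : |z| ≤ |p+z| ≤ N} satisfies (π/2)N² − |p|N ≤ Area(C̃_{p,N}) ≤ (π/2)N². -/
/-!
Rotating `p` to `‖p‖ > 0` and translating by `‖p‖`, `C̃_{p,N}` becomes the cap
`{w : ‖w‖ ≤ N, ‖p‖/2 ≤ re w}` of the disc of radius `N` about `0`. The cap lies in the right
half-disc, of area `π N² / 2` by the symmetry `w ↦ -w`, and together with the rectangle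
`[0, ‖p‖/2] × [-N, N]` it covers that half-disc.
-/

open Real MeasureTheory
open Metric Set

section HalfSpace

variable {E : Type*} [NormedAddCommGroup E] [NormedSpace ℝ E] [MeasurableSpace E] [BorelSpace E]
  [FiniteDimensional ℝ E] (μ : Measure E) [μ.IsAddHaarMeasure] [μ.IsNegInvariant]

/-- The two closed half-spaces cut out by `f` are exchanged by `x ↦ -x` and meet in the
null hyperplane `ker f`. -/
theorem two_mul_measure_inter_nonneg_of_neg_eq {f : E →L[ℝ] ℝ} (hf : f ≠ 0) {s : Set E}
    (hs : MeasurableSet s) (hs_neg : -s = s) :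
    2 * μ (s ∩ {x | 0 ≤ f x}) = μ s := by
  set A := s ∩ {x | 0 ≤ f x}
  have hA : MeasurableSet A := hs.inter (measurableSet_le measurable_const f.measurable)
  have h_neg : -A = s ∩ {x | f x ≤ 0} := by
    ext x
    simp only [A, mem_neg, mem_inter_iff, mem_ofPred_eq, map_neg, neg_nonneg]
    rw [← mem_neg, hs_neg]
  have h_union : A ∪ -A = s := by
    rw [h_neg, ← inter_union_distrib_left]
    exact inter_eq_left.mpr fun x _ => le_total 0 (f x)
  have h_ker : LinearMap.ker (f : E →ₗ[ℝ] ℝ) ≠ ⊤ := by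
    rwa [Ne, LinearMap.ker_eq_top, ← ContinuousLinearMap.toLinearMap_zero,
      ContinuousLinearMap.coe_inj]
  have h_inter : μ (A ∩ -A) = 0 := by
    refine measure_mono_null (fun x hx => ?_) (Measure.addHaar_submodule μ _ h_ker)
    rw [h_neg] at hx
    exact le_antisymm hx.2.2 hx.1.2
  have := measure_union_add_inter (μ := μ) A hA.neg
  rwa [h_union, h_inter, add_zero, Measure.measure_neg, ← two_mul, eq_comm] at this

end HalfSpace

namespace Complex

theorem volume_closedBall_inter_re_nonneg {N : ℝ} (hN : 0 ≤ N) :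
    volume (closedBall (0 : ℂ) N ∩ {z | 0 ≤ z.re}) = ENNReal.ofReal (π / 2 * N ^ 2) := by
  have h_re : reCLM ≠ 0 := fun h => by simpa using congrArg (· 1) h
  have h := two_mul_measure_inter_nonneg_of_neg_eq volume h_re
    (measurableSet_closedBall (x := 0) (ε := N)) (by rw [neg_closedBall, neg_zero])
  simp only [reCLM_apply, volume_closedBall] at h
  rw [← ENNReal.mul_right_inj two_ne_zero ENNReal.ofNat_ne_top, h, ← ENNReal.ofReal_pow hN,
    ← ENNReal.ofReal_coe_nnreal, NNReal.coe_real_pi, ← ENNReal.ofReal_mul (by positivity),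
    ← ENNReal.ofReal_ofNat 2, ← ENNReal.ofReal_mul zero_le_two]
  ring_nf

theorem volume_reProdIm (s t : Set ℝ) : volume (s ×ℂ t) = volume s * volume t := by
  rw [← Measure.prod_prod, ← Measure.volume_eq_prod,
    ← volume_preserving_equiv_real_prod.measure_preimage_equiv]
  rfl

theorem volume_closedBall_inter_re_nonneg_le {a : ℝ} (ha : 0 ≤ a) (N : ℝ) :
    volume (closedBall (0 : ℂ) N ∩ {z | 0 ≤ z.re})
      ≤ volume (closedBall (0 : ℂ) N ∩ {z | a ≤ z.re}) + ENNReal.ofReal (a * (2 * N)) := by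
  have h_cover : closedBall (0 : ℂ) N ∩ {z | 0 ≤ z.re}
      ⊆ (closedBall 0 N ∩ {z | a ≤ z.re}) ∪ Icc 0 a ×ℂ Icc (-N) N := by
    rintro z ⟨hzN, hz0⟩
    rcases le_or_gt a z.re with hza | hza
    · exact Or.inl ⟨hzN, hza⟩
    · rw [mem_closedBall_zero_iff] at hzN
      exact Or.inr ⟨⟨hz0, hza.le⟩, abs_le.mp ((abs_im_le_norm z).trans hzN)⟩
  calc _ ≤ _ := measure_mono h_cover
    _ ≤ _ := measure_union_le _ _
    _ = _ := by
      rw [volume_reProdIm, Real.volume_Icc, Real.volume_Icc, ENNReal.ofReal_mul ha]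
      ring_nf

end Complex

def CpN (p : ℂ) (N : ℝ) : Set ℂ := {z | ‖z‖ ≤ ‖p + z‖ ∧ ‖p + z‖ ≤ N}

theorem isClosed_CpN (p : ℂ) (N : ℝ) : IsClosed (CpN p N) := by
  have h : Continuous fun z : ℂ => ‖p + z‖ := by fun_prop
  exact (isClosed_le continuous_norm h).inter (isClosed_le h continuous_const)

theorem preimage_rotation_CpN (c : Circle) (p : ℂ) (N : ℝ) :
    rotation c ⁻¹' CpN (c * p) N = CpN p N := by
  ext z
  simp only [CpN, mem_preimage, rotation_apply, mem_ofPred_eq, ← mul_add, norm_mul,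
    Circle.norm_coe, one_mul]

theorem volume_CpN_eq_norm (p : ℂ) (N : ℝ) : volume (CpN p N) = volume (CpN ‖p‖ N) := by
  have hp : p = Circle.exp p.arg * (‖p‖ : ℂ) := by
    rw [Circle.coe_exp, mul_comm, Complex.norm_mul_exp_arg_mul_I]
  rw [← preimage_rotation_CpN (Circle.exp p.arg) ‖p‖ N,
    (rotation _).measurePreserving.measure_preimage (isClosed_CpN _ _).nullMeasurableSet, ← hp]

theorem norm_le_norm_ofReal_add_iff {m : ℝ} (hm : 0 < m) (z : ℂ) :
    ‖z‖ ≤ ‖(m : ℂ) + z‖ ↔ m / 2 ≤ ((m : ℂ) + z).re := by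
  rw [← sq_le_sq₀ (norm_nonneg _) (norm_nonneg _), Complex.sq_norm, Complex.sq_norm,
    Complex.normSq_apply, Complex.normSq_apply]
  simp only [Complex.add_re, Complex.add_im, Complex.ofReal_re, Complex.ofReal_im, zero_add]
  constructor <;> intro h <;> nlinarith

theorem CpN_ofReal {m : ℝ} (hm : 0 < m) (N : ℝ) :
    CpN m N = (fun z => (m : ℂ) + z) ⁻¹' (closedBall 0 N ∩ {w | m / 2 ≤ w.re}) := by
  ext z
  rw [CpN, mem_ofPred_eq, norm_le_norm_ofReal_add_iff hm, mem_preimage, mem_inter_iff,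
    mem_closedBall_zero_iff, mem_ofPred_eq, and_comm]

theorem volume_CpN {p : ℂ} (hp : p ≠ 0) (N : ℝ) :
    volume (CpN p N) = volume (closedBall (0 : ℂ) N ∩ {w | ‖p‖ / 2 ≤ w.re}) := by
  rw [volume_CpN_eq_norm, CpN_ofReal (norm_pos_iff.mpr hp),
    (measurePreserving_add_left volume _).measure_preimage
      (measurableSet_closedBall.inter (measurableSet_le measurable_const
        Complex.measurable_re)).nullMeasurableSet]

/-- For `p ∈ ℂ` nonzero with `|p| ≤ 2N`, the area of
`C̃_{p,N} = {z ∈ ℂ : |z| ≤ |p+z| ≤ N}` satisfies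
`(π/2)N² − |p|N ≤ Area(C̃_{p,N}) ≤ (π/2)N²`. -/
theorem area_CpN (p : ℂ) (hp0 : p ≠ 0) (N : ℝ) (hp : ‖p‖ ≤ 2 * N) :
    ENNReal.ofReal (π / 2 * N ^ 2 - ‖p‖ * N)
        ≤ volume {z : ℂ | ‖z‖ ≤ ‖p + z‖ ∧ ‖p + z‖ ≤ N} ∧
      volume {z : ℂ | ‖z‖ ≤ ‖p + z‖ ∧ ‖p + z‖ ≤ N}
        ≤ ENNReal.ofReal (π / 2 * N ^ 2) := by
  have hN : 0 ≤ N := by linarith [norm_nonneg p]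
  have ha : 0 ≤ ‖p‖ / 2 := by positivity
  change _ ≤ volume (CpN p N) ∧ volume (CpN p N) ≤ _
  rw [volume_CpN hp0, ENNReal.ofReal_sub _ (by positivity), tsub_le_iff_right,
    ← Complex.volume_closedBall_inter_re_nonneg hN]
  refine ⟨?_, measure_mono (inter_subset_inter_right _ fun z hz => ha.trans hz)⟩
  convert Complex.volume_closedBall_inter_re_nonneg_le ha N using 3
  ring
end
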